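/- arXiv:2406.16973 — 2 statements merged into one kernel-verified Lean document; each statement's English description precedes it below -/
import Mathlib

section
/- Let n ≥ 3 with n not a power of 2, and let A be an n×n circulant matrix over a finite field F of characteristic 2. Suppose A is semi-involutory with associated non-singular diagonal matrices D₁ and D₂, i.e., A⁻¹ = D₁·A·D₂. If A is MDS, then trace(D₁) = 0 and trace(D₂) = 0. -/
/-!
Since `A` is circulant, so is `A⁻¹ = D₁ A D₂`; comparing entries (all nonzero, `A` being MDS)
gives `d₁ (i + 1) d₂ (j + 1) = d₁ i d₂ j`. Summing over `j` shows that either `tr D₂ = 0` or `d₁`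
is shift invariant, and symmetrically; so either both traces vanish or both `D₁, D₂` are
scalar. In the latter case `A²` is scalar, and its `(-1, 1)` entry `∑ₖ c (1 + k) c (1 - k)`
vanishes. In characteristic two the terms with `k ≠ -k` cancel in pairs, leaving
`∑_{2k = 0} c (1 + k)²`, which a `1 × 1` minor (`n` odd) or a `2 × 2` minor (`n` even) of `A`
shows to be nonzero.
-/

open Matrix

/-- The `n × n` circulant matrix with first row `c₀, c₁, …, c_{n-1}`, i.e. the matrix whose
`(i,j)` entry is `c_{(j - i) mod n}`. -/
def circulantM {n : ℕ} {F : Type*} (c : Fin n → F) : Matrix (Fin n) (Fin n) F :=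
  Matrix.of fun i j => c (j - i)

/-- A square matrix over a field is MDS if every square submatrix (including the matrix
itself) is non-singular. -/
def IsMDS {n : ℕ} {F : Type*} [Field F] (A : Matrix (Fin n) (Fin n) F) : Prop :=
  ∀ (s : ℕ) (r c : Fin s → Fin n), Function.Injective r → Function.Injective c →
    (A.submatrix r c).det ≠ 0

theorem Fin.eq_const_of_apply_add_one_eq {n : ℕ} [NeZero n] {α : Type*} {f : Fin n → α}
    (h : ∀ i, f (i + 1) = f i) : f = fun _ => f 0 := by
  obtain ⟨m, rfl⟩ := Nat.exists_eq_succ_of_ne_zero (NeZero.ne n)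
  funext i
  induction i using Fin.induction with
  | zero => rfl
  | succ i ih => rw [← Fin.coeSucc_eq_succ, h, ih]

theorem Fin.two_mul_val_eq_of_add_self_eq_zero {n : ℕ} [NeZero n] {x : Fin n} (h : x + x = 0)
    (hx : x ≠ 0) : 2 * x.val = n := by
  have hmod : (x.val + x.val) % n = 0 := by simpa [Fin.ext_iff, Fin.val_add] using h
  have hx' : x.val ≠ 0 := Fin.val_ne_iff.mpr hx
  have := Nat.eq_of_dvd_of_lt_two_mul (by omega) (Nat.dvd_of_mod_eq_zero hmod) (by omega)
  omega

theorem Fin.eq_of_add_self_eq_zero {n : ℕ} [NeZero n] {x y : Fin n} (hx : x + x = 0)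
    (hy : y + y = 0) (hx0 : x ≠ 0) (hy0 : y ≠ 0) : x = y := by
  have := Fin.two_mul_val_eq_of_add_self_eq_zero hx hx0
  have := Fin.two_mul_val_eq_of_add_self_eq_zero hy hy0
  exact Fin.ext (by omega)

theorem Fin.neg_one_ne_one {n : ℕ} [NeZero n] (hn : 3 ≤ n) : (-1 : Fin n) ≠ 1 := by
  have hval : (1 : Fin n).val = 1 := by rw [Fin.val_one', Nat.mod_eq_of_lt (by omega)]
  intro h
  have := Fin.two_mul_val_eq_of_add_self_eq_zero (neg_eq_iff_add_eq_zero.mp h)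
    (by rw [Ne, Fin.ext_iff, hval, Fin.val_zero]; omega)
  omega

theorem CharTwo.sum_mul_neg_eq_sum_sq {G R : Type*} [AddCommGroup G] [Fintype G] [DecidableEq G]
    [CommRing R] [CharP R 2] (g : G → R) :
    ∑ h, g h * g (-h) = ∑ h with h + h = 0, g h ^ 2 := by
  rw [← Finset.sum_filter_add_sum_filter_not Finset.univ (fun h => h + h = 0)]
  have hpairs : ∑ h with ¬h + h = 0, g h * g (-h) = 0 := by
    refine Finset.sum_involution (fun h _ => -h) (fun h _ => ?_) (fun h hh _ => ?_)
      (fun h hh => ?_) (fun h _ => neg_neg h)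
    · rw [neg_neg, mul_comm, CharTwo.add_self_eq_zero]
    · exact fun hneg => (Finset.mem_filter.mp hh).2 (neg_eq_iff_add_eq_zero.mp hneg)
    · simp only [Finset.mem_filter, Finset.mem_univ, true_and] at hh ⊢
      rwa [← neg_add, neg_eq_zero]
  rw [hpairs, add_zero]
  refine Finset.sum_congr rfl fun h hh => ?_
  rw [neg_eq_iff_add_eq_zero.mpr (Finset.mem_filter.mp hh).2, sq]

section DiagonalScaling

variable {ι R : Type*} [Fintype ι] [CommRing R] [IsDomain R] {d₁ d₂ : ι → R}

theorem apply_mul_apply_perm_eq_of_inv_eq [DecidableEq ι] {M : Matrix ι ι R} (e : Equiv.Perm ι)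
    (hM : M.submatrix e e = M) (hM0 : ∀ i j, M i j ≠ 0)
    (hsi : M⁻¹ = diagonal d₁ * M * diagonal d₂) (i j : ι) :
    d₁ (e i) * d₂ (e j) = d₁ i * d₂ j := by
  have hinv : M⁻¹.submatrix e e = M⁻¹ := by rw [← inv_submatrix_equiv, hM]
  have h := congr_fun₂ hinv i j
  have hMij := congr_fun₂ hM i j
  rw [hsi] at h
  simp only [submatrix_apply, mul_diagonal, diagonal_mul] at h hMij
  rw [hMij] at h
  exact mul_left_cancel₀ (hM0 i j) (by linear_combination h)

theorem sum_eq_zero_or_apply_perm_eq (e : Equiv.Perm ι)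
    (hkey : ∀ i j, d₁ (e i) * d₂ (e j) = d₁ i * d₂ j) :
    ∑ j, d₂ j = 0 ∨ ∀ i, d₁ (e i) = d₁ i := by
  refine or_iff_not_imp_left.mpr fun h i => mul_right_cancel₀ h ?_
  calc d₁ (e i) * ∑ j, d₂ j = d₁ (e i) * ∑ j, d₂ (e j) := by rw [Equiv.sum_comp e d₂]
    _ = d₁ i * ∑ j, d₂ j := by simp only [Finset.mul_sum, hkey]

theorem sum_eq_zero_and_sum_eq_zero_or_apply_perm_eq (e : Equiv.Perm ι)
    (hkey : ∀ i j, d₁ (e i) * d₂ (e j) = d₁ i * d₂ j) (hd₁ : ∀ i, d₁ i ≠ 0)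
    (hd₂ : ∀ j, d₂ j ≠ 0) :
    (∑ i, d₁ i = 0 ∧ ∑ j, d₂ j = 0) ∨ ((∀ i, d₁ (e i) = d₁ i) ∧ ∀ j, d₂ (e j) = d₂ j) := by
  have hkey' : ∀ j i, d₂ (e j) * d₁ (e i) = d₂ j * d₁ i := fun j i => by
    rw [mul_comm, hkey, mul_comm]
  have h₁₂ (h₁ : ∀ i, d₁ (e i) = d₁ i) (j : ι) : d₂ (e j) = d₂ j :=
    mul_left_cancel₀ (hd₁ j) (by rw [← hkey j j, h₁])
  have h₂₁ (h₂ : ∀ j, d₂ (e j) = d₂ j) (i : ι) : d₁ (e i) = d₁ i :=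
    mul_left_cancel₀ (hd₂ i) (by rw [← hkey' i i, h₂])
  rcases sum_eq_zero_or_apply_perm_eq e hkey with h₂ | h₁
  · rcases sum_eq_zero_or_apply_perm_eq e hkey' with h₁ | h₂'
    · exact Or.inl ⟨h₁, h₂⟩
    · exact Or.inr ⟨h₂₁ h₂', h₂'⟩
  · exact Or.inr ⟨h₁, h₁₂ h₁⟩

end DiagonalScaling

theorem mul_self_eq_scalar_of_inv_eq_smul {ι F : Type*} [Fintype ι] [DecidableEq ι] [Field F]
    {A : Matrix ι ι F} (hA : IsUnit A.det) {a : F} (ha : a ≠ 0) (h : A⁻¹ = a • A) :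
    A * A = scalar ι a⁻¹ := by
  calc A * A = a⁻¹ • (A * (a • A)) := by rw [mul_smul_comm, inv_smul_smul₀ ha]
    _ = scalar ι a⁻¹ := by rw [← h, mul_nonsing_inv A hA, smul_one_eq_diagonal]; rfl

section Circulant

variable {n : ℕ} {F : Type*}

@[simp]
theorem circulantM_apply (c : Fin n → F) (i j : Fin n) : circulantM c i j = c (j - i) := rfl

theorem circulantM_submatrix_addRight [NeZero n] (c : Fin n → F) (k : Fin n) :
    (circulantM c).submatrix (Equiv.addRight k) (Equiv.addRight k) = circulantM c := by
  ext i j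
  simp

end Circulant

namespace IsMDS

variable {n : ℕ} {F : Type*} [Field F]

theorem apply_ne_zero {A : Matrix (Fin n) (Fin n) F} (hA : IsMDS A) (i j : Fin n) :
    A i j ≠ 0 := by
  simpa using hA 1 (fun _ => i) (fun _ => j) (Function.injective_of_subsingleton _)
    (Function.injective_of_subsingleton _)

theorem det_two_ne_zero {A : Matrix (Fin n) (Fin n) F} (hA : IsMDS A) {i₁ i₂ j₁ j₂ : Fin n}
    (hi : i₁ ≠ i₂) (hj : j₁ ≠ j₂) : A i₁ j₁ * A i₂ j₂ - A i₁ j₂ * A i₂ j₁ ≠ 0 := by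
  have h := hA 2 ![i₁, i₂] ![j₁, j₂] (injective_pair_iff_ne.mpr hi) (injective_pair_iff_ne.mpr hj)
  rw [det_fin_two] at h
  simpa using h

theorem sum_circulantM_sq_ne_zero [NeZero n] [CharP F 2] {c : Fin n → F}
    (hA : IsMDS (circulantM c)) : ∑ h with h + h = 0, c (1 + h) ^ 2 ≠ 0 := by
  by_cases hhalf : ∃ m : Fin n, m ≠ 0 ∧ m + m = 0
  · obtain ⟨m, hm0, hm⟩ := hhalf
    have hfix : ({h | h + h = 0} : Finset (Fin n)) = {0, m} := by
      ext h
      simp only [Finset.mem_filter, Finset.mem_univ, true_and, Finset.mem_insert,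
        Finset.mem_singleton]
      refine ⟨fun hh => or_iff_not_imp_left.mpr fun h0 => ?_, ?_⟩
      · exact Fin.eq_of_add_self_eq_zero hh hm h0 hm0
      · rintro (rfl | rfl)
        exacts [add_zero 0, hm]
    have hneg : 1 - m = 1 + m := by rw [sub_eq_add_neg, neg_eq_iff_add_eq_zero.mpr hm]
    have hminor := hA.det_two_ne_zero (i₁ := 0) (i₂ := m) (j₁ := 1) (j₂ := 1 + m)
      (Ne.symm hm0) (by simpa using hm0)
    rw [hfix, Finset.sum_pair (Ne.symm hm0)]
    simp only [circulantM_apply, sub_zero, add_sub_cancel_right, hneg] at hminor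
    simp only [add_zero]
    intro hsum
    exact hminor (by linear_combination hsum - c (1 + m) ^ 2 * CharTwo.two_eq_zero (R := F))
  · push Not at hhalf
    have hfix : ({h | h + h = 0} : Finset (Fin n)) = {0} := by
      ext h
      simp only [Finset.mem_filter, Finset.mem_univ, true_and, Finset.mem_singleton]
      exact ⟨fun hh => by_contra fun h0 => hhalf h h0 hh, fun h0 => by rw [h0, add_zero]⟩
    rw [hfix, Finset.sum_singleton, add_zero]
    exact pow_ne_zero 2 (by simpa using hA.apply_ne_zero 0 1)

theorem circulantM_mul_self_ne_scalar [CharP F 2] {c : Fin n → F} (hn : 3 ≤ n)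
    (hA : IsMDS (circulantM c)) (a : F) : circulantM c * circulantM c ≠ scalar (Fin n) a := by
  have : NeZero n := ⟨by omega⟩
  intro hsq
  have hentry : (circulantM c * circulantM c) (-1) 1 = ∑ k, c (1 + k) * c (1 + -k) := by
    simp only [mul_apply, circulantM_apply]
    refine Finset.sum_congr rfl fun k _ => ?_
    congr 2 <;> abel
  rw [hsq, scalar_apply, diagonal_apply_ne _ (Fin.neg_one_ne_one hn),
    CharTwo.sum_mul_neg_eq_sum_sq (fun k => c (1 + k))] at hentry
  exact hA.sum_circulantM_sq_ne_zero hentry.symm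

end IsMDS

theorem trace_eq_zero_of_circulant_semiInvolutory_mds_general {F : Type*} [Field F]
    [CharP F 2] {n : ℕ} (hn : 3 ≤ n)
    (c : Fin n → F) (A : Matrix (Fin n) (Fin n) F)
    (hA : A = circulantM c) (hAdet : A.det ≠ 0)
    (D₁ D₂ : Matrix (Fin n) (Fin n) F)
    (hD₁diag : D₁.IsDiag) (hD₂diag : D₂.IsDiag)
    (hD₁det : D₁.det ≠ 0) (hD₂det : D₂.det ≠ 0)
    (hsi : A⁻¹ = D₁ * A * D₂)
    (hmds : IsMDS A) :
    D₁.trace = 0 ∧ D₂.trace = 0 := by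
  have : NeZero n := ⟨by omega⟩
  subst hA
  obtain ⟨d₁, rfl⟩ : ∃ d, D₁ = diagonal d := ⟨_, hD₁diag.diagonal_diag.symm⟩
  obtain ⟨d₂, rfl⟩ : ∃ d, D₂ = diagonal d := ⟨_, hD₂diag.diagonal_diag.symm⟩
  have hd₁ : ∀ i, d₁ i ≠ 0 := by simpa [Finset.prod_ne_zero_iff] using hD₁det
  have hd₂ : ∀ j, d₂ j ≠ 0 := by simpa [Finset.prod_ne_zero_iff] using hD₂det
  have hkey := apply_mul_apply_perm_eq_of_inv_eq (Equiv.addRight 1)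
    (circulantM_submatrix_addRight c 1) hmds.apply_ne_zero hsi
  rw [trace_diagonal, trace_diagonal]
  refine (sum_eq_zero_and_sum_eq_zero_or_apply_perm_eq _ hkey hd₁ hd₂).resolve_right ?_
  rintro ⟨hinv₁, hinv₂⟩
  have hsmul : (circulantM c)⁻¹ = (d₁ 0 * d₂ 0) • circulantM c := by
    rw [hsi, Fin.eq_const_of_apply_add_one_eq hinv₁, Fin.eq_const_of_apply_add_one_eq hinv₂,
      ← smul_one_eq_diagonal, ← smul_one_eq_diagonal]
    simp only [smul_mul_assoc, mul_smul_comm, one_mul, mul_one, smul_smul, mul_comm]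
  exact hmds.circulantM_mul_self_ne_scalar hn _ (mul_self_eq_scalar_of_inv_eq_smul
    (isUnit_iff_ne_zero.mpr hAdet) (mul_ne_zero (hd₁ 0) (hd₂ 0)) hsmul)

/-- Let `n ≥ 3` with `n` not a power of 2, and let `A` be an `n × n`
circulant matrix over a finite field `F` of characteristic 2. Suppose `A` is semi-involutory
with associated non-singular diagonal matrices `D₁, D₂`, i.e. `A⁻¹ = D₁ * A * D₂`.
If `A` is MDS, then `trace D₁ = 0` and `trace D₂ = 0`. -/
theorem trace_eq_zero_of_circulant_semiInvolutory_mds {F : Type*} [Field F] [Fintype F]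
    [CharP F 2] {n : ℕ} (hn : 3 ≤ n) (hnot : ∀ d : ℕ, n ≠ 2 ^ d)
    (c : Fin n → F) (A : Matrix (Fin n) (Fin n) F)
    (hA : A = circulantM c) (hAdet : A.det ≠ 0)
    (D₁ D₂ : Matrix (Fin n) (Fin n) F)
    (hD₁diag : D₁.IsDiag) (hD₂diag : D₂.IsDiag)
    (hD₁det : D₁.det ≠ 0) (hD₂det : D₂.det ≠ 0)
    (hsi : A⁻¹ = D₁ * A * D₂)
    (hmds : IsMDS A) :
    D₁.trace = 0 ∧ D₂.trace = 0 :=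
  trace_eq_zero_of_circulant_semiInvolutory_mds_general hn c A hA hAdet D₁ D₂ hD₁diag hD₂diag hD₁det
    hD₂det hsi hmds
end

section
/- Let n = 2k be even with k ≥ 2, let A = circulant(a₀, a₁, …, a_{n−1}) be an n×n circulant matrix over a field F of characteristic 2, and let D₁ = diagonal(d₀, …, d_{n−1}) and D₂ = diagonal(e₀, …, e_{n−1}) be non-singular diagonal matrices over F such that A·D₁·A·D₂ = I. If a₁ ≠ a_{k+1}, then trace(D₁) = d₀ + d₁ + ⋯ + d_{n−1} = 0. -/
/-!
Look at the entries `(i, i + 2)` of `A D₁ A`: they vanish because `A D₁ A D₂ = I` and `D₂` is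
invertible. Summing them over `i` and reindexing gives `(∑ᵤ aᵤ a₂₋ᵤ) · trace D₁ = 0`. In
characteristic 2 the terms `u` and `2 - u` of the first factor cancel in pairs, leaving only the
solutions of `u + u = 2`, namely `1` and `k + 1`; so the factor is `a₁² + a²ₖ₊₁ = (a₁ + aₖ₊₁)²`,
which is nonzero.
-/

open Matrix

open Finset

theorem sum_circulantM_mul_diagonal_mul_circulantM_apply_add {R : Type*} [CommSemiring R]
    {n : ℕ} [NeZero n] (a d : Fin n → R) (s : Fin n) :
    ∑ i, (circulantM a * diagonal d * circulantM a) i (i + s) =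
      (∑ u, a u * a (s - u)) * ∑ t, d t := by
  simp only [Matrix.mul_assoc, mul_apply (M := circulantM a), diagonal_mul]
  simp only [circulantM, of_apply]
  rw [sum_comm, mul_sum]
  refine sum_congr rfl fun t _ => ?_
  rw [sum_mul]
  refine Fintype.sum_equiv (Equiv.subLeft t) _ _ fun i => ?_
  rw [Equiv.subLeft_apply, show i + s - t = s - (t - i) by abel]
  ring

theorem CharTwo.sum_mul_apply_sub {R G : Type*} [CommSemiring R] [CharP R 2] [AddCommGroup G]
    [Fintype G] [DecidableEq G] (f : G → R) (s : G) :
    ∑ u, f u * f (s - u) = ∑ u with u + u = s, f u ^ 2 := by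
  rw [← sum_filter_add_sum_filter_not univ (fun u => u + u = s)]
  have hfixed : ∑ u with u + u = s, f u * f (s - u) = ∑ u with u + u = s, f u ^ 2 :=
    sum_congr rfl fun u hu => by
      rw [← (mem_filter.mp hu).2, add_sub_cancel_right, sq]
  have hpaired : ∑ u with ¬u + u = s, f u * f (s - u) = 0 := by
    refine sum_involution (fun u _ => s - u) (fun u _ => ?_) (fun u hu _ => ?_)
      (fun u hu => ?_) (fun u _ => sub_sub_cancel s u)
    · rw [sub_sub_cancel, mul_comm (f (s - u)), CharTwo.add_self_eq_zero]
    · intro hfix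
      exact (mem_filter.mp hu).2 (by nth_rw 1 [← hfix]; rw [sub_add_cancel])
    · simp only [mem_filter, mem_univ, true_and] at hu ⊢
      intro hsym
      apply hu
      rw [← sub_eq_zero, ← neg_eq_zero, ← sub_eq_zero.mpr hsym]
      abel
  rw [hfixed, hpaired, add_zero]

theorem Fin.add_self_eq_two_iff {k : ℕ} [NeZero (k + k)] (hk : 2 ≤ k) (u : Fin (k + k)) :
    u + u = 2 ↔ u.val = 1 ∨ u.val = k + 1 := by
  rw [Fin.ext_iff, Fin.val_add, Fin.coe_ofNat_eq_mod, Nat.mod_eq_of_lt (show 2 < k + k by omega)]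
  rcases lt_or_ge (u.val + u.val) (k + k) with hlt | hge
  · rw [Nat.mod_eq_of_lt hlt]; omega
  · rw [Nat.mod_eq_sub_mod hge, Nat.mod_eq_of_lt (by omega)]; omega

theorem Matrix.apply_eq_zero_of_mul_diagonal_eq_one {R n : Type*} [Semiring R]
    [NoZeroDivisors R] [Fintype n] [DecidableEq n] {M : Matrix n n R} {e : n → R}
    (h : M * diagonal e = 1) {i j : n} (hij : i ≠ j) (hj : e j ≠ 0) : M i j = 0 := by
  have := congrFun (congrFun h i) j
  rw [mul_diagonal, one_apply_ne hij] at this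
  exact (mul_eq_zero.mp this).resolve_right hj

/-- Let `n = 2k` be even with `k ≥ 2`, let `A = circulant(a₀, …, a_{n-1})`
be an `n × n` circulant matrix over a field `F` of characteristic 2, and let
`D₁ = diagonal d`, `D₂ = diagonal e` be non-singular diagonal matrices over `F` such that
`A * D₁ * A * D₂ = I`. If `a₁ ≠ a_{k+1}`, then `trace D₁ = d₀ + d₁ + ⋯ + d_{n-1} = 0`. -/
theorem trace_eq_zero_of_semiInvolutory_even_order {F : Type*} [Field F] [CharP F 2]
    {k : ℕ} (hk : 2 ≤ k)
    (a d e : Fin (k + k) → F) (he : ∀ i, e i ≠ 0)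
    (h : circulantM a * Matrix.diagonal d * circulantM a * Matrix.diagonal e = 1)
    (ha : a ⟨1, by omega⟩ ≠ a ⟨k + 1, by omega⟩) :
    (Matrix.diagonal d).trace = 0 := by
  have : NeZero (k + k) := ⟨by omega⟩
  have htwo : (2 : Fin (k + k)) ≠ 0 := by
    simp [Fin.ext_iff, Fin.coe_ofNat_eq_mod, Nat.mod_eq_of_lt (show 2 < k + k by omega)]
  have hoff : ∀ i : Fin (k + k), (circulantM a * diagonal d * circulantM a) i (i + 2) = 0 :=
    fun i => apply_eq_zero_of_mul_diagonal_eq_one h (fun hi => htwo (add_eq_left.mp hi.symm)) (he _)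
  have hsquares :
      ({u | u + u = 2} : Finset (Fin (k + k))) = {⟨1, by omega⟩, ⟨k + 1, by omega⟩} := by
    ext u
    simp [Fin.add_self_eq_two_iff hk, Fin.ext_iff]
  have hprod : (a ⟨1, by omega⟩ + a ⟨k + 1, by omega⟩) ^ 2 * ∑ t, d t = 0 := by
    rw [CharTwo.add_sq, ← sum_pair (f := fun u => a u ^ 2) (by simp [Fin.ext_iff]; omega),
      ← hsquares, ← CharTwo.sum_mul_apply_sub,
      ← sum_circulantM_mul_diagonal_mul_circulantM_apply_add]
    exact sum_eq_zero fun i _ => hoff i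
  rw [trace_diagonal]
  exact (mul_eq_zero.mp hprod).resolve_left (pow_ne_zero 2 (mt CharTwo.add_eq_zero.mp ha))
end
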